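/- arXiv:1802.05454 — 4 statements merged into one kernel-verified Lean document; each statement's English description precedes it below -/
import Mathlib

section
/- Let V be a finite-dimensional vector space over a field and let (h_k : V → V) be an arbitrary sequence of linear endomorphisms. Then the inverse limit of the inverse sequence V ← V ← V ← ... with bonding maps h_k is a finite-dimensional vector space. -/
set_option synthInstance.maxHeartbeats 400000
set_option maxHeartbeats 800000


/-- The inverse limit of the constant inverse sequence `V ← V ← ...` with bonding
maps `h k : V → V`, as the submodule of threads in `ℕ → V`. -/
def inverseLimitConst {K V : Type*} [Field K] [AddCommGroup V] [Module K V]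
    (h : ℕ → (V →ₗ[K] V)) : Submodule K (ℕ → V) where
  carrier := {v | ∀ k, h k (v (k + 1)) = v k}
  add_mem' := by intro a b ha hb k; simp [ha k, hb k]
  zero_mem' := by intro k; simp
  smul_mem' := by intro c a ha k; simp [ha k]

/-- Projection of the inverse limit onto the `n`-th coordinate. -/
noncomputable def invLimProj {K V : Type*} [Field K] [AddCommGroup V] [Module K V]
    (h : ℕ → (V →ₗ[K] V)) (n : ℕ) : ↥(inverseLimitConst h) →ₗ[K] V :=
  (LinearMap.proj n).comp (inverseLimitConst h).subtype

theorem invLimProj_comp {K V : Type*} [Field K] [AddCommGroup V] [Module K V]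
    (h : ℕ → (V →ₗ[K] V)) (n : ℕ) :
    invLimProj h n = (h n).comp (invLimProj h (n + 1)) := by
  ext v
  exact (v.2 n).symm

theorem invLimProj_range {K V : Type*} [Field K] [AddCommGroup V] [Module K V]
    (h : ℕ → (V →ₗ[K] V)) (n : ℕ) :
    LinearMap.range (invLimProj h n) =
      Submodule.map (h n) (LinearMap.range (invLimProj h (n + 1))) := by
  rw [invLimProj_comp h n, LinearMap.range_comp]

theorem inverseLimit_const_finiteDimensional {K V : Type*} [Field K] [AddCommGroup V]
    [Module K V] [FiniteDimensional K V] (h : ℕ → (V →ₗ[K] V)) :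
    FiniteDimensional K ↥(inverseLimitConst h) := by
  classical
  set f : ℕ → ℕ := fun n => Module.finrank K (LinearMap.range (invLimProj h n)) with hf
  have fmono : Monotone f := by
    apply monotone_nat_of_le_succ
    intro n
    rw [hf]
    simp only
    rw [invLimProj_range h n]
    exact Submodule.finrank_map_le _ _
  have fbdd : BddAbove (Set.range f) := by
    refine ⟨Module.finrank K V, ?_⟩
    rintro x ⟨n, rfl⟩
    exact Submodule.finrank_le _
  obtain ⟨N, hN⟩ : sSup (Set.range f) ∈ Set.range f :=
    Nat.sSup_mem ⟨f 0, ⟨0, rfl⟩⟩ fbdd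
  have hmax : ∀ n, N ≤ n → f n = f N := by
    intro n hn
    refine le_antisymm ?_ (fmono hn)
    rw [hN]
    exact le_csSup fbdd ⟨n, rfl⟩
  -- injectivity of h n on range (invLimProj h (n+1)) for n ≥ N
  have hinj : ∀ n, N ≤ n → ∀ x ∈ LinearMap.range (invLimProj h (n + 1)),
      h n x = 0 → x = 0 := by
    intro n hn x hx hx0
    set R := LinearMap.range (invLimProj h (n + 1)) with hR
    have hker : LinearMap.ker ((h n).domRestrict R) = ⊥ := by
      have h1 : Module.finrank K (LinearMap.range ((h n).domRestrict R)) +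
          Module.finrank K (LinearMap.ker ((h n).domRestrict R)) = Module.finrank K R :=
        LinearMap.finrank_range_add_finrank_ker _
      have h2 : LinearMap.range ((h n).domRestrict R) = R.map (h n) := by
        simp [LinearMap.range_domRestrict]
      rw [h2, ← invLimProj_range h n] at h1
      have e1 : f n = f N := hmax n hn
      have e2 : f (n + 1) = f N := hmax (n + 1) (le_trans hn (Nat.le_succ n))
      have e3 : f n = Module.finrank K (LinearMap.range (invLimProj h n)) := rfl
      have e4 : f (n + 1) = Module.finrank K R := rfl
      have h3 : Module.finrank K (LinearMap.range (invLimProj h n)) = Module.finrank K R := by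
        omega
      have h4 : Module.finrank K (LinearMap.ker ((h n).domRestrict R)) = 0 := by omega
      have : FiniteDimensional K ↥(LinearMap.ker ((h n).domRestrict R)) := by
        have : FiniteDimensional K R := inferInstance
        exact FiniteDimensional.finiteDimensional_submodule _
      exact Submodule.finrank_eq_zero.mp h4
    have : (⟨x, hx⟩ : R) ∈ LinearMap.ker ((h n).domRestrict R) := by
      simpa [LinearMap.mem_ker] using hx0
    rw [hker] at this
    simpa using congrArg Subtype.val this
  -- invLimProj h N is injective
  have hinjN : Function.Injective (invLimProj h N) := by
    rw [← LinearMap.ker_eq_bot]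
    rw [eq_bot_iff]
    intro v hv
    simp only [LinearMap.mem_ker] at hv
    -- all coordinates ≥ N vanish
    have hup : ∀ k, invLimProj h (N + k) v = 0 := by
      intro k
      induction k with
      | zero => simpa using hv
      | succ k ih =>
        have hx : invLimProj h (N + k + 1) v ∈ LinearMap.range (invLimProj h (N + k + 1)) :=
          ⟨v, rfl⟩
        have h0 : h (N + k) (invLimProj h (N + k + 1) v) = 0 := by
          have := congrFun (congrArg DFunLike.coe (invLimProj_comp h (N + k))) v
          simp only [LinearMap.comp_apply] at this
          rw [← this]
          exact ih
        exact hinj (N + k) (Nat.le_add_right N k) _ hx h0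
    -- propagate down
    have hdown : ∀ d n, invLimProj h (n + d) v = 0 → invLimProj h n v = 0 := by
      intro d
      induction d with
      | zero => intro n hn; simpa using hn
      | succ d ih =>
        intro n hn
        have h1 : invLimProj h (n + 1) v = 0 := by
          apply ih
          have : n + 1 + d = n + (d + 1) := by omega
          rw [this]
          exact hn
        have := congrFun (congrArg DFunLike.coe (invLimProj_comp h n)) v
        simp only [LinearMap.comp_apply] at this
        rw [this, h1, map_zero]
    have hall : ∀ n, invLimProj h n v = 0 := by
      intro n
      rcases le_total N n with hle | hle
      · obtain ⟨k, rfl⟩ := Nat.exists_eq_add_of_le hle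
        exact hup k
      · obtain ⟨d, hd⟩ := Nat.exists_eq_add_of_le hle
        exact hdown d n (by rw [← hd]; exact hup 0)
    have : (v : ℕ → V) = 0 := funext fun n => hall n
    exact Submodule.mem_bot K |>.mpr (Subtype.ext this)
  exact FiniteDimensional.of_injective (invLimProj h N) hinjN
end

section
/- Let K ⊆ ℝ² be a compact set with empty interior, let h : ℝ² → ℝ² be a homeomorphism with h(K) ⊆ K, and let A be a bounded connected component of ℝ² \ K. Then h(A) is not contained in the unbounded component of ℝ² \ K: there exists a ∈ A such that h(a) lies in some bounded component of ℝ² \ K. -/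
/-- Let `K ⊆ ℝ²` be compact with empty interior, `h` a homeomorphism of the plane with
`h(K) ⊆ K`, and `A` a bounded connected component of `ℝ² \ K`. Then some point of `A`
is mapped by `h` into a bounded component of `ℝ² \ K`. -/
theorem image_meets_bounded_component {K : Set (EuclideanSpace ℝ (Fin 2))}
    (hKc : IsCompact K) (hKint : interior K = ∅)
    (h : EuclideanSpace ℝ (Fin 2) ≃ₜ EuclideanSpace ℝ (Fin 2)) (hhK : h '' K ⊆ K)
    (A : Set (EuclideanSpace ℝ (Fin 2)))
    (hA : ∃ x ∈ Kᶜ, A = connectedComponentIn Kᶜ x) (hAb : Bornology.IsBounded A) :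
    ∃ a ∈ A, ∃ B : Set (EuclideanSpace ℝ (Fin 2)),
      (∃ x ∈ Kᶜ, B = connectedComponentIn Kᶜ x) ∧ Bornology.IsBounded B ∧ h a ∈ B := by
  obtain ⟨x, hx, rfl⟩ := hA
  set A := connectedComponentIn Kᶜ x with hAdef
  have hKo : IsOpen Kᶜ := hKc.isClosed.isOpen_compl
  have hAo : IsOpen A := hKo.connectedComponentIn
  have hAsub : A ⊆ Kᶜ := connectedComponentIn_subset _ _
  -- the frontier of A is contained in K
  have hfr : closure A \ A ⊆ K := by
    rintro z ⟨hz1, hz2⟩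
    by_contra hzK
    have hzc : z ∈ Kᶜ := hzK
    have hN : IsOpen (connectedComponentIn Kᶜ z) := hKo.connectedComponentIn
    have hzN : z ∈ connectedComponentIn Kᶜ z := mem_connectedComponentIn hzc
    obtain ⟨a, haN, haA⟩ := mem_closure_iff.mp hz1 _ hN hzN
    have h1 := connectedComponentIn_eq haN
    have h2 := connectedComponentIn_eq haA
    exact hz2 (by show z ∈ connectedComponentIn Kᶜ x; rw [h2, ← h1]; exact hzN)
  -- closure A is compact
  have hclA : IsCompact (closure A) :=
    Metric.isCompact_of_isClosed_isBounded isClosed_closure hAb.closure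
  have hclAim : IsCompact (h '' closure A) := hclA.image h.continuous
  have himcl : closure (h '' A) = h '' closure A := (h.image_closure A).symm
  -- frontier of h '' A is contained in K
  have hfr' : closure (h '' A) \ h '' A ⊆ K := by
    rw [himcl, ← Set.image_diff h.injective]
    exact (Set.image_mono hfr).trans hhK
  -- h '' A is open and not contained in K
  have hoim : IsOpen (h '' A) := h.isOpen_image.mpr hAo
  have hxA : x ∈ A := mem_connectedComponentIn hx
  obtain ⟨y, hyA, hyK⟩ : ∃ y ∈ h '' A, y ∉ K := by
    by_contra hcon
    push_neg at hcon
    have : h '' A ⊆ interior K := hoim.subset_interior_iff.mpr hcon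
    rw [hKint] at this
    exact this ⟨x, hxA, rfl⟩
  obtain ⟨a, haA, rfl⟩ := hyA
  refine ⟨a, haA, connectedComponentIn Kᶜ (h a), ⟨h a, hyK, rfl⟩, ?_,
    mem_connectedComponentIn hyK⟩
  -- the component B of h a stays inside h '' A, hence is bounded
  have hBsub : connectedComponentIn Kᶜ (h a) ⊆ h '' A := by
    refine (isPreconnected_connectedComponentIn).subset_left_of_subset_union
      (v := (closure (h '' A))ᶜ) hoim isClosed_closure.isOpen_compl ?_ ?_
      ⟨h a, mem_connectedComponentIn hyK, ⟨a, haA, rfl⟩⟩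
    · exact Set.disjoint_left.mpr fun z hz hz' => hz' (subset_closure hz)
    · intro z hz
      by_cases hzc : z ∈ closure (h '' A)
      · rcases Classical.em (z ∈ h '' A) with hzi | hzi
        · exact Or.inl hzi
        · exact absurd (hfr' ⟨hzc, hzi⟩) (connectedComponentIn_subset _ _ hz)
      · exact Or.inr hzc
  exact (hclAim.isBounded.subset (hBsub.trans ((h.image_closure A ▸ subset_closure : h '' A ⊆ h '' closure A))))
end

section
/- Let K ⊆ ℝ² be a continuum with empty interior such that ℝ² \ K has finitely many connected components, at least two of which exist (i.e., there is at least one bounded component). Then there is no contractive homeomorphism h of ℝ² with h(K) ⊆ K. -/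
open EMetric Filter Topology

/-- A nonempty open set in `ℝ²` has positive diameter. -/
lemma open_nonempty_diam_pos {s : Set (EuclideanSpace ℝ (Fin 2))}
    (hs : IsOpen s) (h : s.Nonempty) : 0 < EMetric.diam s := by
  obtain ⟨x, hx⟩ := h
  have hm : s ∈ 𝓝[≠] x := mem_nhdsWithin_of_mem_nhds (hs.mem_nhds hx)
  obtain ⟨y, hy⟩ := Filter.nonempty_of_mem (Filter.inter_mem hm self_mem_nhdsWithin)
  have hnt : s.Nontrivial := ⟨y, hy.1, x, hx, hy.2⟩
  rw [pos_iff_ne_zero]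
  exact fun h0 => hnt.not_subsingleton (EMetric.diam_eq_zero_iff.mp h0)

/-- Let `K ⊆ ℝ²` be a continuum with empty interior such that `ℝ² \ K` has finitely many
connected components, at least two (so at least one bounded component). Then there is no
contractive homeomorphism `h` of `ℝ²` with `h(K) ⊆ K`. -/
theorem no_contractive_homeo_into {K : Set (EuclideanSpace ℝ (Fin 2))}
    (hKc : IsCompact K) (hKconn : IsConnected K) (hKint : interior K = ∅)
    (hfin : {C : Set (EuclideanSpace ℝ (Fin 2)) |
      ∃ x ∈ Kᶜ, C = connectedComponentIn Kᶜ x}.Finite)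
    (hbdd : ∃ x ∈ Kᶜ, Bornology.IsBounded (connectedComponentIn Kᶜ x)) :
    ¬∃ h : EuclideanSpace ℝ (Fin 2) ≃ₜ EuclideanSpace ℝ (Fin 2),
      (∃ c : NNReal, c < 1 ∧ LipschitzWith c h) ∧ h '' K ⊆ K := by
  rintro ⟨h, ⟨c, hc, hlip⟩, hhK⟩
  obtain ⟨x₀, hx₀, hUbdd⟩ := hbdd
  set U := connectedComponentIn Kᶜ x₀ with hUdef
  have hKopen : IsOpen Kᶜ := hKc.isClosed.isOpen_compl
  -- iterates of h map K into K
  have hKn : ∀ n : ℕ, (⇑h)^[n] '' K ⊆ K := by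
    intro n
    induction n with
    | zero => simp
    | succ n ih =>
      rw [Function.iterate_succ', Set.image_comp]
      exact (Set.image_mono ih).trans hhK
  have hri : Function.LeftInverse ⇑h ⇑h.symm := fun x => h.apply_symm_apply x
  have hli : Function.LeftInverse ⇑h.symm ⇑h := fun x => h.symm_apply_apply x
  -- images of U under iterates are open
  have hopen : ∀ m : ℕ, IsOpen ((⇑h)^[m] '' U) := by
    intro m
    induction m with
    | zero => simpa using hKopen.connectedComponentIn
    | succ m ih =>
      rw [Function.iterate_succ', Set.image_comp]
      exact h.isOpenMap _ ih
  -- iterates of h.symm map Kᶜ into Kᶜ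
  have hsymmKc : ∀ n : ℕ, ∀ x ∉ K, (⇑h.symm)^[n] x ∉ K := by
    intro n x hx hmem
    apply hx
    have : (⇑h)^[n] ((⇑h.symm)^[n] x) ∈ K :=
      hKn n ⟨(⇑h.symm)^[n] x, hmem, rfl⟩
    rwa [(hri.iterate n) x] at this
  -- the finite family of components
  have hUmem : U ∈ hfin.toFinset := hfin.mem_toFinset.mpr ⟨x₀, hx₀, rfl⟩
  set δ : ENNReal := hfin.toFinset.inf' ⟨U, hUmem⟩ EMetric.diam with hδdef
  have hδpos : 0 < δ := by
    rw [hδdef]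
    refine (Finset.lt_inf'_iff ..).2 ?_
    rintro C hC
    obtain ⟨x, hx, rfl⟩ := hfin.mem_toFinset.mp hC
    exact open_nonempty_diam_pos (hKopen.connectedComponentIn)
      ⟨x, mem_connectedComponentIn hx⟩
  -- choose n with cⁿ · diam U < δ
  have hctop : Tendsto (fun n : ℕ => (c : ENNReal) ^ n * EMetric.diam U) atTop (𝓝 (0 * EMetric.diam U)) := by
    refine ENNReal.Tendsto.mul_const ?_ (Or.inr hUbdd.ediam_ne_top)
    exact ENNReal.tendsto_pow_atTop_nhds_zero_of_lt_one
      (by exact_mod_cast hc)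
  rw [zero_mul] at hctop
  obtain ⟨n, hn⟩ := (hctop.eventually_lt_const hδpos).exists
  -- the image of U under the n-th iterate
  set V : Set (EuclideanSpace ℝ (Fin 2)) := (⇑h)^[n] '' U with hVdef
  have hVdiam : EMetric.diam V ≤ (c : ENNReal) ^ n * EMetric.diam U := by
    simpa [EMetric.diam] using (hlip.iterate n).ediam_image_le U
  have hVopen : IsOpen V := hopen n
  have hVne : V.Nonempty := ⟨(⇑h)^[n] x₀, ⟨x₀, mem_connectedComponentIn hx₀, rfl⟩⟩
  -- V is open nonempty, K has empty interior, so V contains a point outside K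
  have : ∃ y ∈ V, y ∉ K := by
    by_contra hcon
    push_neg at hcon
    have : V ⊆ interior K := hVopen.subset_interior_iff.mpr hcon
    rw [hKint] at this
    exact hVne.ne_empty (Set.subset_empty_iff.mp this)
  obtain ⟨y, hyV, hyK⟩ := this
  -- the component of y in Kᶜ is contained in V
  obtain ⟨u, huU, huy⟩ := hyV
  set C := connectedComponentIn Kᶜ y with hCdef
  have hCsub : C ⊆ V := by
    -- pull back by h.symm^[n]
    have hA : (⇑h.symm)^[n] '' C ⊆ U := by
      have hconn : IsPreconnected ((⇑h.symm)^[n] '' C) :=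
        (isPreconnected_connectedComponentIn).image _
          ((h.symm.continuous.iterate n).continuousOn)
      have hmemu : (⇑h.symm)^[n] y ∈ (⇑h.symm)^[n] '' C :=
        ⟨y, mem_connectedComponentIn hyK, rfl⟩
      have hsub : (⇑h.symm)^[n] '' C ⊆ Kᶜ := by
        rintro _ ⟨z, hz, rfl⟩
        exact hsymmKc n z (connectedComponentIn_subset _ _ hz)
      have := hconn.subset_connectedComponentIn hmemu hsub
      have hyu : (⇑h.symm)^[n] y = u := by rw [← huy, (hli.iterate n) u]
      rw [hyu] at this
      exact this.trans (connectedComponentIn_eq huU).symm.subset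
    intro z hz
    have : (⇑h.symm)^[n] z ∈ U := hA ⟨z, hz, rfl⟩
    exact ⟨(⇑h.symm)^[n] z, this, (hri.iterate n) z⟩
  -- C is one of the finitely many components, so δ ≤ diam C
  have hCmem : C ∈ hfin.toFinset := hfin.mem_toFinset.mpr ⟨y, hyK, rfl⟩
  have hδC : δ ≤ EMetric.diam C := Finset.inf'_le _ hCmem
  have : EMetric.diam C < δ :=
    lt_of_le_of_lt ((EMetric.diam_mono hCsub).trans hVdiam) hn
  exact absurd (lt_of_le_of_lt hδC this) (lt_irrefl δ)
end

section
/- Let 𝓕 = {h_1, ..., h_r} be an IFS of contractive homeomorphisms of ℝ² whose attractor K is a continuum with empty interior. Then ℝ² \ K does not have a finite number ≥ 2 of connected components; equivalently, either ℝ² \ K is connected or it has infinitely many connected components. -/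
open Metric Set Filter Topology ENNReal

local notation "E2" => EuclideanSpace ℝ (Fin 2)

private lemma rank_two' : 1 < Module.rank ℝ E2 := by
  have h := Module.finrank_eq_rank ℝ E2
  rw [finrank_euclideanSpace_fin] at h
  rw [← h]
  norm_num

/-- The complement of a closed ball in the plane is connected. -/
private lemma isConnected_compl_closedBall' (R : ℝ) (hR : 0 ≤ R) :
    IsConnected ((Metric.closedBall (0 : E2) R)ᶜ) := by
  set v : E2 := EuclideanSpace.single (0 : Fin 2) (1 : ℝ) with hv
  have hvnorm : ‖v‖ = 1 := by simp [hv, EuclideanSpace.norm_single]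
  set L : Set E2 := (fun s : ℝ => s • v) '' Ioi R with hL
  have hLsub : L ⊆ (Metric.closedBall (0 : E2) R)ᶜ := by
    rintro - ⟨s, hs, rfl⟩
    simp only [mem_compl_iff, mem_closedBall_zero_iff, not_le, norm_smul, hvnorm, mul_one,
      Real.norm_eq_abs]
    rw [abs_of_nonneg (hR.trans (le_of_lt hs))]
    exact hs
  have hLconn : IsPreconnected L :=
    (isPreconnected_Ioi).image _ (continuous_id.smul continuous_const).continuousOn
  have hmemL : ∀ t : ℝ, R < t → t • v ∈ L := fun t ht => ⟨t, ht, rfl⟩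
  have key : (Metric.closedBall (0 : E2) R)ᶜ = ⋃ t : Ioi R, (Metric.sphere (0 : E2) t ∪ L) := by
    ext x
    simp only [mem_compl_iff, mem_closedBall_zero_iff, not_le, mem_iUnion]
    constructor
    · intro hx
      exact ⟨⟨‖x‖, hx⟩, Or.inl (by simp [mem_sphere_zero_iff_norm])⟩
    · rintro ⟨⟨t, ht⟩, (hx | hx)⟩
      · rw [mem_sphere_zero_iff_norm] at hx
        rw [hx]; exact ht
      · have := hLsub hx
        simpa only [mem_compl_iff, mem_closedBall_zero_iff, not_le] using this
  rw [key]
  constructor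
  · exact ⟨(R + 1) • v, mem_iUnion.2 ⟨⟨R + 1, by simp [lt_add_iff_pos_right]⟩,
      Or.inr (hmemL _ (by linarith))⟩⟩
  · apply isPreconnected_iUnion
    · refine ⟨(R + 1) • v, mem_iInter.2 fun t => Or.inr (hmemL _ (by linarith))⟩
    · rintro ⟨t, ht⟩
      have ht' : R < t := ht
      have ht0 : (0 : ℝ) ≤ t := hR.trans (le_of_lt ht')
      have hsph : IsPreconnected (Metric.sphere (0 : E2) t) :=
        (isConnected_sphere rank_two' 0 ht0).isPreconnected
      have htv : t • v ∈ Metric.sphere (0 : E2) t := by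
        simp [mem_sphere_zero_iff_norm, norm_smul, hvnorm, abs_of_nonneg ht0]
      exact IsPreconnected.union (t • v) htv (hmemL t ht') hsph hLconn

/-- A preconnected set meeting an open set but not its frontier is contained in it. -/
private lemma preconnected_subset_of_open' {X : Type*} [TopologicalSpace X] {s U : Set X}
    (hs : IsPreconnected s) (hU : IsOpen U) (hne : (s ∩ U).Nonempty)
    (hfr : s ∩ frontier U = ∅) : s ⊆ U := by
  have hnotfr : ∀ x ∈ s, x ∉ frontier U := by
    intro x hx hxf
    have : x ∈ s ∩ frontier U := ⟨hx, hxf⟩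
    rw [hfr] at this
    exact this
  have hclosure : s ⊆ closure U := by
    by_contra hcon
    obtain ⟨z, hzs, hz⟩ : ∃ z ∈ s, z ∉ closure U := by
      simpa [Set.subset_def] using hcon
    have hcover : s ⊆ U ∪ (closure U)ᶜ := by
      intro x hx
      by_cases hxc : x ∈ closure U
      · rcases (closure_eq_self_union_frontier U ▸ hxc) with h1 | h1
        · exact Or.inl h1
        · exact absurd h1 (hnotfr x hx)
      · exact Or.inr hxc
    obtain ⟨w, -, hw1, hw2⟩ := hs U (closure U)ᶜ hU isClosed_closure.isOpen_compl hcover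
      hne ⟨z, hzs, hz⟩
    exact hw2 (subset_closure hw1)
  intro x hx
  rcases (closure_eq_self_union_frontier U ▸ hclosure hx) with h1 | h1
  · exact h1
  · exact absurd h1 (hnotfr x hx)

/-- If the attractor `K` of an IFS of contractive homeomorphisms of `ℝ²` is a continuum
with empty interior, then `ℝ² \ K` cannot have a finite number `≥ 2` of connected
components: either it is connected or it has infinitely many components. (Equivalently,
`K` has the shape of a point or of the Hawaiian earring.) -/
theorem ifs_attractor_empty_interior_components {r : ℕ}
    (h : Fin r → (EuclideanSpace ℝ (Fin 2) ≃ₜ EuclideanSpace ℝ (Fin 2)))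
    (hcontr : ∀ i, ∃ c : NNReal, c < 1 ∧ LipschitzWith c (h i))
    (K : Set (EuclideanSpace ℝ (Fin 2))) (hKne : K.Nonempty) (hKc : IsCompact K)
    (hKconn : IsConnected K) (hKint : interior K = ∅)
    (hKinv : K = ⋃ i, h i '' K) :
    ¬({C : Set (EuclideanSpace ℝ (Fin 2)) |
        ∃ x ∈ Kᶜ, C = connectedComponentIn Kᶜ x}.Finite ∧
      2 ≤ {C : Set (EuclideanSpace ℝ (Fin 2)) |
        ∃ x ∈ Kᶜ, C = connectedComponentIn Kᶜ x}.ncard) := by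
  rintro ⟨hfin, hcard⟩
  set S := {C : Set E2 | ∃ x ∈ Kᶜ, C = connectedComponentIn Kᶜ x} with hSdef
  have hKopen : IsOpen Kᶜ := hKc.isClosed.isOpen_compl
  -- `r ≥ 1`, and we fix a single contraction mapping `K` into itself
  have hr : 0 < r := by
    by_contra hr0
    push_neg at hr0
    interval_cases r
    · rw [iUnion_of_empty] at hKinv
      exact hKne.ne_empty hKinv
  obtain ⟨c, hc1, hlip⟩ := hcontr ⟨0, hr⟩
  set f : E2 → E2 := (h ⟨0, hr⟩ : E2 → E2) with hfdef
  have hfK : f '' K ⊆ K := by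
    conv_rhs => rw [hKinv]
    exact subset_iUnion (fun i => (h i : E2 → E2) '' K) ⟨0, hr⟩
  -- `K` is contained in a closed ball of radius `R ≥ 0`
  obtain ⟨R, hKR⟩ : ∃ R, K ⊆ Metric.closedBall (0 : E2) R :=
    hKc.isBounded.subset_closedBall (0 : E2)
  have hR0 : 0 ≤ R := by
    obtain ⟨x, hx⟩ := hKne
    have := hKR hx
    rw [mem_closedBall_zero_iff] at this
    exact (norm_nonneg x).trans this
  -- basic facts about connected components of `Kᶜ`
  have hdisj : ∀ C ∈ S, ∀ z ∈ C, C = connectedComponentIn Kᶜ z := by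
    rintro C ⟨x, hx, rfl⟩ z hz
    exact connectedComponentIn_eq hz
  have hS_sub : ∀ C ∈ S, C ⊆ Kᶜ := by
    rintro C ⟨x, hx, rfl⟩
    exact connectedComponentIn_subset Kᶜ x
  have hS_ne : ∀ C ∈ S, C.Nonempty := by
    rintro C ⟨x, hx, rfl⟩
    exact ⟨x, mem_connectedComponentIn hx⟩
  have hS_open : ∀ C ∈ S, IsOpen C := by
    rintro C ⟨x, hx, rfl⟩
    exact hKopen.connectedComponentIn
  -- every component has positive diameter
  have hS_pos : ∀ C ∈ S, 0 < EMetric.diam C := by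
    intro C hC
    obtain ⟨x, hx⟩ := hS_ne C hC
    have hnb : C ∈ 𝓝[≠] x := mem_nhdsWithin_of_mem_nhds ((hS_open C hC).mem_nhds hx)
    have hmem : (C ∩ {x}ᶜ) ∈ 𝓝[≠] x := Filter.inter_mem hnb self_mem_nhdsWithin
    obtain ⟨y, hyC, hyx⟩ := Filter.nonempty_of_mem hmem
    show 0 < Metric.ediam C
    rw [Metric.ediam_pos_iff']
    exact ⟨x, hx, y, hyC, fun hxy => hyx (by simp [hxy.symm])⟩
  -- the minimal diameter of a component
  have hSne : S.Nonempty := by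
    rcases S.eq_empty_or_nonempty with hS0 | hS0
    · rw [hS0] at hcard
      simp at hcard
    · exact hS0
  set δ := sInf (EMetric.diam '' S) with hδdef
  have hδmem : δ ∈ EMetric.diam '' S := (hSne.image _).csInf_mem (hfin.image _)
  obtain ⟨C₁, hC₁S, hC₁δ⟩ := hδmem
  have hδpos : 0 < δ := hC₁δ ▸ hS_pos C₁ hC₁S
  have hδle : ∀ C ∈ S, δ ≤ EMetric.diam C := fun C hC => sInf_le ⟨C, hC, rfl⟩
  -- the unbounded component `C₀`
  have hball : (Metric.closedBall (0 : E2) R)ᶜ ⊆ Kᶜ := compl_subset_compl.2 hKR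
  have hWconn := isConnected_compl_closedBall' R hR0
  obtain ⟨x₀, hx₀W⟩ := hWconn.nonempty
  set C₀ := connectedComponentIn Kᶜ x₀ with hC₀def
  have hWC₀ : (Metric.closedBall (0 : E2) R)ᶜ ⊆ C₀ :=
    hWconn.isPreconnected.subset_connectedComponentIn hx₀W hball
  have hC₀S : C₀ ∈ S := ⟨x₀, hball hx₀W, rfl⟩
  -- there is another component `D`, and it is bounded
  obtain ⟨D, hDS, hDne⟩ : ∃ D ∈ S, D ≠ C₀ := by
    by_contra hcon
    push_neg at hcon
    have hsub : S ⊆ {C₀} := fun C hC => hcon C hC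
    have := Set.ncard_le_ncard hsub (Set.finite_singleton _)
    rw [Set.ncard_singleton] at this
    omega
  have hDsub : D ⊆ Metric.closedBall (0 : E2) R := by
    intro z hz
    by_contra hzout
    have hzC₀ : z ∈ C₀ := hWC₀ hzout
    exact hDne ((hdisj D hDS z hz).trans (hdisj C₀ hC₀S z hzC₀).symm)
  have hDdiam : EMetric.diam D ≠ ⊤ :=
    ((Metric.isBounded_closedBall).subset hDsub).ediam_ne_top
  -- the frontier of `D` lies in `K`
  have hfrD : frontier D ⊆ K := by
    intro z hz
    by_contra hzK
    have hzK' : z ∈ Kᶜ := hzK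
    have hzD : z ∉ D := by
      intro hmem
      apply hz.2
      rw [(hS_open D hDS).interior_eq]
      exact hmem
    have hnb : connectedComponentIn Kᶜ z ∈ 𝓝 z :=
      hKopen.connectedComponentIn.mem_nhds (mem_connectedComponentIn hzK')
    obtain ⟨w, hw1, hw2⟩ := mem_closure_iff_nhds.1 hz.1 _ hnb
    have h1 := hdisj D hDS w hw2
    have h2 : connectedComponentIn Kᶜ w = connectedComponentIn Kᶜ z := (connectedComponentIn_eq hw1).symm
    apply hzD
    rw [h1, h2]
    exact mem_connectedComponentIn hzK'
  -- properties of the iterated images of `D`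
  have hiter_fr : ∀ n, frontier (f^[n] '' D) ⊆ K := by
    intro n
    induction n with
    | zero => simpa using hfrD
    | succ n ih =>
      rw [Function.iterate_succ', Set.image_comp]
      rw [← Homeomorph.image_frontier]
      exact fun x ⟨y, hy, hxy⟩ => hfK ⟨y, ih hy, hxy⟩
  have hiter_open : ∀ n, IsOpen (f^[n] '' D) := by
    intro n
    induction n with
    | zero => simpa using hS_open D hDS
    | succ n ih =>
      rw [Function.iterate_succ', Set.image_comp]
      exact (h ⟨0, hr⟩).isOpenMap _ ih
  have hiter_ne : ∀ n, (f^[n] '' D).Nonempty := fun n => (hS_ne D hDS).image _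
  have hiter_diam : ∀ n, EMetric.diam (f^[n] '' D) ≤ (c : ℝ≥0∞) ^ n * EMetric.diam D := by
    intro n
    have := (hlip.iterate n).ediam_image_le D
    show Metric.ediam _ ≤ _ * Metric.ediam D
    simpa [ENNReal.coe_pow] using this
  -- choose `n` so that the diameter bound beats `δ`
  have htend : Tendsto (fun n : ℕ => (c : ℝ≥0∞) ^ n * EMetric.diam D) atTop (𝓝 0) := by
    have h1 : Tendsto (fun n : ℕ => (c : ℝ≥0∞) ^ n) atTop (𝓝 0) :=
      ENNReal.tendsto_pow_atTop_nhds_zero_of_lt_one (by exact_mod_cast hc1)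
    simpa using ENNReal.Tendsto.mul_const h1 (Or.inr hDdiam)
  obtain ⟨n, hn⟩ := (htend.eventually (gt_mem_nhds hδpos)).exists
  -- the iterated hole is not contained in `K` (empty interior), giving a tiny component
  have hnotsub : ¬ f^[n] '' D ⊆ K := by
    intro hsub
    have hint : f^[n] '' D ⊆ interior K := interior_maximal hsub (hiter_open n)
    rw [hKint, Set.subset_empty_iff] at hint
    exact (hiter_ne n).ne_empty hint
  obtain ⟨y, hyDn, hyK⟩ := not_subset.1 hnotsub
  set C' := connectedComponentIn Kᶜ y with hC'def
  have hC'S : C' ∈ S := ⟨y, hyK, rfl⟩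
  have hC'sub : C' ⊆ f^[n] '' D := by
    apply preconnected_subset_of_open' isPreconnected_connectedComponentIn (hiter_open n)
    · exact ⟨y, mem_connectedComponentIn hyK, hyDn⟩
    · ext z
      simp only [Set.mem_inter_iff, Set.mem_empty_iff_false, iff_false, not_and]
      intro hz1 hz2
      exact hS_sub C' hC'S hz1 (hiter_fr n hz2)
  have hcontra : δ < δ := by
    calc δ ≤ EMetric.diam C' := hδle C' hC'S
    _ ≤ EMetric.diam (f^[n] '' D) := EMetric.diam_mono hC'sub
    _ ≤ (c : ℝ≥0∞) ^ n * EMetric.diam D := hiter_diam n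
    _ < δ := hn
  exact lt_irrefl δ hcontra
end
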